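/- The contraction rule for equalities, Contr^=, is admissible in G3c^=⁻: for all terms s, r and finite multisets Γ, Δ of formulas, if the sequent s = r, s = r, Γ ⇒ Δ is derivable in G3c^=⁻, then the sequent s = r, Γ ⇒ Δ is derivable in G3c^=⁻ (by one application of Repl⁻, turning one copy of s = r into s = s, followed by one application of Ref). -/

import Mathlib

open FirstOrder Language Multiset

universe u v

variable {L : FirstOrder.Language.{u, v}}

/-- Number of occurrences of the variable `v` in a term. -/
def tCount (v : ℕ) : L.Term ℕ → ℕ
  | .var w => if w = v then 1 else 0
  | .func _ ts => Finset.univ.sum fun i => tCount v (ts i)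

/-- First-order formulas over the language `L` (with built-in equality),
with natural numbers as variables. -/
inductive Fm (L : FirstOrder.Language.{u, v}) : Type (max u v) where
  | falsum : Fm L
  | equal : L.Term ℕ → L.Term ℕ → Fm L
  | rel {l : ℕ} : L.Relations l → (Fin l → L.Term ℕ) → Fm L
  | and : Fm L → Fm L → Fm L
  | or : Fm L → Fm L → Fm L
  | imp : Fm L → Fm L → Fm L
  | all : ℕ → Fm L → Fm L
  | ex : ℕ → Fm L → Fm L

namespace Fm

/-- Atomic formulas: equalities and relational atoms. -/
inductive IsAtomic : Fm L → Prop where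
  | equal (t₁ t₂ : L.Term ℕ) : (Fm.equal t₁ t₂).IsAtomic
  | rel {l : ℕ} (R : L.Relations l) (ts : Fin l → L.Term ℕ) : (Fm.rel R ts).IsAtomic

/-- Number of free occurrences of the variable `v` in a formula. -/
def fCount (v : ℕ) : Fm L → ℕ
  | falsum => 0
  | equal t₁ t₂ => tCount v t₁ + tCount v t₂
  | rel _ ts => Finset.univ.sum fun i => tCount v (ts i)
  | and A B => fCount v A + fCount v B
  | or A B => fCount v A + fCount v B
  | imp A B => fCount v A + fCount v B
  | all y A => if y = v then 0 else fCount v A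
  | ex y A => if y = v then 0 else fCount v A

/-- The set of free variables of a formula. -/
def freeVars : Fm L → Set ℕ
  | falsum => ∅
  | equal t₁ t₂ => {w | tCount w t₁ ≠ 0 ∨ tCount w t₂ ≠ 0}
  | rel _ ts => {w | ∃ i, tCount w (ts i) ≠ 0}
  | and A B => A.freeVars ∪ B.freeVars
  | or A B => A.freeVars ∪ B.freeVars
  | imp A B => A.freeVars ∪ B.freeVars
  | all y A => A.freeVars \ {y}
  | ex y A => A.freeVars \ {y}

/-- Simultaneous substitution of terms for the free variables of a formula. -/
def ssub (σ : ℕ → L.Term ℕ) : Fm L → Fm L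
  | falsum => falsum
  | equal t₁ t₂ => equal (t₁.subst σ) (t₂.subst σ)
  | rel R ts => rel R fun i => (ts i).subst σ
  | and A B => and (A.ssub σ) (B.ssub σ)
  | or A B => or (A.ssub σ) (B.ssub σ)
  | imp A B => imp (A.ssub σ) (B.ssub σ)
  | all y A => all y (A.ssub (Function.update σ y (Term.var y)))
  | ex y A => ex y (A.ssub (Function.update σ y (Term.var y)))

/-- `A.subst v t` is `A[v/t]`, the substitution of the term `t`
for the variable `v` in `A`. -/
def subst (v : ℕ) (t : L.Term ℕ) (A : Fm L) : Fm L :=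
  A.ssub (Function.update (Term.var : ℕ → L.Term ℕ) v t)

/-- `t` is free for `x` in `A` (no free occurrence of `x` lies in the scope of a
quantifier binding a variable of `t`). -/
def freeFor (t : L.Term ℕ) (x : ℕ) : Fm L → Prop
  | falsum => True
  | equal _ _ => True
  | rel _ _ => True
  | and A B => freeFor t x A ∧ freeFor t x B
  | or A B => freeFor t x A ∧ freeFor t x B
  | imp A B => freeFor t x A ∧ freeFor t x B
  | all y A => x = y ∨ x ∉ A.freeVars ∨ (tCount y t = 0 ∧ freeFor t x A)
  | ex y A => x = y ∨ x ∉ A.freeVars ∨ (tCount y t = 0 ∧ freeFor t x A)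

end Fm

/-- The rule Repl, given as the relation between the antecedent of the premiss and the
antecedent of the conclusion (the succedent is unchanged): from
`s = r, P[v/s], P[v/r], Γ ⇒ Δ` infer `s = r, P[v/s], Γ ⇒ Δ`, for `P` atomic and
`v` not occurring in `s, r`. -/
def ReplFull (L : FirstOrder.Language.{u, v}) : Multiset (Fm L) → Multiset (Fm L) → Prop := fun Γp Γc =>
  ∃ (s r : L.Term ℕ) (v : ℕ) (P : Fm L) (Γ : Multiset (Fm L)),
    P.IsAtomic ∧ tCount v s = 0 ∧ tCount v r = 0 ∧
    Γp = Fm.equal s r ::ₘ P.subst v s ::ₘ P.subst v r ::ₘ Γ ∧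
    Γc = Fm.equal s r ::ₘ P.subst v s ::ₘ Γ

/-- The rule Repl⁻: from `s = r, P[v/r], Γ ⇒ Δ` infer `s = r, P[v/s], Γ ⇒ Δ`,
for `P` atomic and `v` not occurring in `s, r`. -/
def ReplMinus (L : FirstOrder.Language.{u, v}) : Multiset (Fm L) → Multiset (Fm L) → Prop := fun Γp Γc =>
  ∃ (s r : L.Term ℕ) (v : ℕ) (P : Fm L) (Γ : Multiset (Fm L)),
    P.IsAtomic ∧ tCount v s = 0 ∧ tCount v r = 0 ∧
    Γp = Fm.equal s r ::ₘ P.subst v r ::ₘ Γ ∧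
    Γc = Fm.equal s r ::ₘ P.subst v s ::ₘ Γ

/-- The rule Repl₁⁻: Repl⁻ restricted to atomic `P` with exactly one occurrence of `v`. -/
def ReplMinus1 (L : FirstOrder.Language.{u, v}) : Multiset (Fm L) → Multiset (Fm L) → Prop := fun Γp Γc =>
  ∃ (s r : L.Term ℕ) (v : ℕ) (P : Fm L) (Γ : Multiset (Fm L)),
    P.IsAtomic ∧ tCount v s = 0 ∧ tCount v r = 0 ∧ Fm.fCount v P = 1 ∧
    Γp = Fm.equal s r ::ₘ P.subst v r ::ₘ Γ ∧
    Γc = Fm.equal s r ::ₘ P.subst v s ::ₘ Γ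

/-- `DerC rp n Γ Δ`: the sequent `Γ ⇒ Δ` has a derivation of height at most `n` in the
classical multisuccedent G3 calculus `G3c` with the equality rule Ref and the
replacement rule given by `rp` (e.g. `ReplFull L` for `G3c^=`, `ReplMinus L` for `G3c^=⁻`,
`ReplMinus1 L` for `G3c₁^=⁻`). -/
inductive DerC (rp : Multiset (Fm L) → Multiset (Fm L) → Prop) :
    ℕ → Multiset (Fm L) → Multiset (Fm L) → Prop where
  | ax {n : ℕ} {Γ Δ : Multiset (Fm L)} {P : Fm L} (hP : P.IsAtomic) :
      DerC rp n (P ::ₘ Γ) (P ::ₘ Δ)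
  | botL {n : ℕ} {Γ Δ : Multiset (Fm L)} : DerC rp n (Fm.falsum ::ₘ Γ) Δ
  | andL {n : ℕ} {Γ Δ : Multiset (Fm L)} {A B : Fm L} :
      DerC rp n (A ::ₘ B ::ₘ Γ) Δ → DerC rp (n + 1) (Fm.and A B ::ₘ Γ) Δ
  | andR {n : ℕ} {Γ Δ : Multiset (Fm L)} {A B : Fm L} :
      DerC rp n Γ (A ::ₘ Δ) → DerC rp n Γ (B ::ₘ Δ) → DerC rp (n + 1) Γ (Fm.and A B ::ₘ Δ)
  | orL {n : ℕ} {Γ Δ : Multiset (Fm L)} {A B : Fm L} :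
      DerC rp n (A ::ₘ Γ) Δ → DerC rp n (B ::ₘ Γ) Δ → DerC rp (n + 1) (Fm.or A B ::ₘ Γ) Δ
  | orR {n : ℕ} {Γ Δ : Multiset (Fm L)} {A B : Fm L} :
      DerC rp n Γ (A ::ₘ B ::ₘ Δ) → DerC rp (n + 1) Γ (Fm.or A B ::ₘ Δ)
  | impL {n : ℕ} {Γ Δ : Multiset (Fm L)} {A B : Fm L} :
      DerC rp n Γ (A ::ₘ Δ) → DerC rp n (B ::ₘ Γ) Δ → DerC rp (n + 1) (Fm.imp A B ::ₘ Γ) Δ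
  | impR {n : ℕ} {Γ Δ : Multiset (Fm L)} {A B : Fm L} :
      DerC rp n (A ::ₘ Γ) (B ::ₘ Δ) → DerC rp (n + 1) Γ (Fm.imp A B ::ₘ Δ)
  | allL {n : ℕ} {Γ Δ : Multiset (Fm L)} {x : ℕ} {t : L.Term ℕ} {A : Fm L}
      (hf : Fm.freeFor t x A) :
      DerC rp n (A.subst x t ::ₘ Fm.all x A ::ₘ Γ) Δ → DerC rp (n + 1) (Fm.all x A ::ₘ Γ) Δ
  | allR {n : ℕ} {Γ Δ : Multiset (Fm L)} {x y : ℕ} {A : Fm L}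
      (hf : Fm.freeFor (Term.var y) x A) (hy : y ∉ (Fm.all x A).freeVars)
      (hΓ : ∀ C ∈ Γ, y ∉ Fm.freeVars C) (hΔ : ∀ C ∈ Δ, y ∉ Fm.freeVars C) :
      DerC rp n Γ (A.subst x (Term.var y) ::ₘ Δ) → DerC rp (n + 1) Γ (Fm.all x A ::ₘ Δ)
  | exL {n : ℕ} {Γ Δ : Multiset (Fm L)} {x y : ℕ} {A : Fm L}
      (hf : Fm.freeFor (Term.var y) x A) (hy : y ∉ (Fm.ex x A).freeVars)
      (hΓ : ∀ C ∈ Γ, y ∉ Fm.freeVars C) (hΔ : ∀ C ∈ Δ, y ∉ Fm.freeVars C) :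
      DerC rp n (A.subst x (Term.var y) ::ₘ Γ) Δ → DerC rp (n + 1) (Fm.ex x A ::ₘ Γ) Δ
  | exR {n : ℕ} {Γ Δ : Multiset (Fm L)} {x : ℕ} {t : L.Term ℕ} {A : Fm L}
      (hf : Fm.freeFor t x A) :
      DerC rp n Γ (A.subst x t ::ₘ Fm.ex x A ::ₘ Δ) → DerC rp (n + 1) Γ (Fm.ex x A ::ₘ Δ)
  | ref {n : ℕ} {Γ Δ : Multiset (Fm L)} (t : L.Term ℕ) :
      DerC rp n (Fm.equal t t ::ₘ Γ) Δ → DerC rp (n + 1) Γ Δ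
  | repl {n : ℕ} {Γp Γc Δ : Multiset (Fm L)} (h : rp Γp Γc) :
      DerC rp n Γp Δ → DerC rp (n + 1) Γc Δ

/-- `DerI rp n Γ Δ`: the sequent `Γ ⇒ Δ` has a derivation of height at most `n` in the
intuitionistic multisuccedent G3 calculus (the right rules for `→` and `∀` have
single-succedent premisses, and L→ repeats its principal formula) with the equality rule
Ref and the replacement rule given by `rp`. -/
inductive DerI (rp : Multiset (Fm L) → Multiset (Fm L) → Prop) :
    ℕ → Multiset (Fm L) → Multiset (Fm L) → Prop where
  | ax {n : ℕ} {Γ Δ : Multiset (Fm L)} {P : Fm L} (hP : P.IsAtomic) :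
      DerI rp n (P ::ₘ Γ) (P ::ₘ Δ)
  | botL {n : ℕ} {Γ Δ : Multiset (Fm L)} : DerI rp n (Fm.falsum ::ₘ Γ) Δ
  | andL {n : ℕ} {Γ Δ : Multiset (Fm L)} {A B : Fm L} :
      DerI rp n (A ::ₘ B ::ₘ Γ) Δ → DerI rp (n + 1) (Fm.and A B ::ₘ Γ) Δ
  | andR {n : ℕ} {Γ Δ : Multiset (Fm L)} {A B : Fm L} :
      DerI rp n Γ (A ::ₘ Δ) → DerI rp n Γ (B ::ₘ Δ) → DerI rp (n + 1) Γ (Fm.and A B ::ₘ Δ)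
  | orL {n : ℕ} {Γ Δ : Multiset (Fm L)} {A B : Fm L} :
      DerI rp n (A ::ₘ Γ) Δ → DerI rp n (B ::ₘ Γ) Δ → DerI rp (n + 1) (Fm.or A B ::ₘ Γ) Δ
  | orR {n : ℕ} {Γ Δ : Multiset (Fm L)} {A B : Fm L} :
      DerI rp n Γ (A ::ₘ B ::ₘ Δ) → DerI rp (n + 1) Γ (Fm.or A B ::ₘ Δ)
  | impL {n : ℕ} {Γ Δ : Multiset (Fm L)} {A B : Fm L} :
      DerI rp n (Fm.imp A B ::ₘ Γ) (A ::ₘ Δ) → DerI rp n (B ::ₘ Γ) Δ →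
      DerI rp (n + 1) (Fm.imp A B ::ₘ Γ) Δ
  | impR {n : ℕ} {Γ Δ : Multiset (Fm L)} {A B : Fm L} :
      DerI rp n (A ::ₘ Γ) {B} → DerI rp (n + 1) Γ (Fm.imp A B ::ₘ Δ)
  | allL {n : ℕ} {Γ Δ : Multiset (Fm L)} {x : ℕ} {t : L.Term ℕ} {A : Fm L}
      (hf : Fm.freeFor t x A) :
      DerI rp n (A.subst x t ::ₘ Fm.all x A ::ₘ Γ) Δ → DerI rp (n + 1) (Fm.all x A ::ₘ Γ) Δ
  | allR {n : ℕ} {Γ Δ : Multiset (Fm L)} {x y : ℕ} {A : Fm L}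
      (hf : Fm.freeFor (Term.var y) x A) (hy : y ∉ (Fm.all x A).freeVars)
      (hΓ : ∀ C ∈ Γ, y ∉ Fm.freeVars C) :
      DerI rp n Γ {A.subst x (Term.var y)} → DerI rp (n + 1) Γ (Fm.all x A ::ₘ Δ)
  | exL {n : ℕ} {Γ Δ : Multiset (Fm L)} {x y : ℕ} {A : Fm L}
      (hf : Fm.freeFor (Term.var y) x A) (hy : y ∉ (Fm.ex x A).freeVars)
      (hΓ : ∀ C ∈ Γ, y ∉ Fm.freeVars C) (hΔ : ∀ C ∈ Δ, y ∉ Fm.freeVars C) :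
      DerI rp n (A.subst x (Term.var y) ::ₘ Γ) Δ → DerI rp (n + 1) (Fm.ex x A ::ₘ Γ) Δ
  | exR {n : ℕ} {Γ Δ : Multiset (Fm L)} {x : ℕ} {t : L.Term ℕ} {A : Fm L}
      (hf : Fm.freeFor t x A) :
      DerI rp n Γ (A.subst x t ::ₘ Fm.ex x A ::ₘ Δ) → DerI rp (n + 1) Γ (Fm.ex x A ::ₘ Δ)
  | ref {n : ℕ} {Γ Δ : Multiset (Fm L)} (t : L.Term ℕ) :
      DerI rp n (Fm.equal t t ::ₘ Γ) Δ → DerI rp (n + 1) Γ Δ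
  | repl {n : ℕ} {Γp Γc Δ : Multiset (Fm L)} (h : rp Γp Γc) :
      DerI rp n Γp Δ → DerI rp (n + 1) Γc Δ


lemma tCount_eq_zero_of_notMem_varFinset {v : ℕ} :
    ∀ t : L.Term ℕ, v ∉ t.varFinset → tCount v t = 0
  | .var w, h => by
      simp only [Term.varFinset, Finset.mem_singleton] at h
      simp [tCount, Ne.symm h]
  | .func _ ts, h => by
      simp only [Term.varFinset, Finset.mem_biUnion, Finset.mem_univ, true_and, not_exists] at h
      simp only [tCount, Finset.sum_eq_zero_iff, Finset.mem_univ, forall_const]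
      exact fun i => tCount_eq_zero_of_notMem_varFinset (ts i) (h i)

lemma exists_tCount_eq_zero (ts : Finset (L.Term ℕ)) : ∃ v, ∀ t ∈ ts, tCount v t = 0 := by
  obtain ⟨v, hv⟩ := Infinite.exists_notMem_finset (ts.biUnion Term.varFinset)
  simp only [Finset.mem_biUnion, not_exists, not_and] at hv
  exact ⟨v, fun t ht => tCount_eq_zero_of_notMem_varFinset t (hv t ht)⟩

lemma subst_update_var_eq_self_of_tCount_eq_zero {v : ℕ} {u : L.Term ℕ} :
    ∀ t : L.Term ℕ, tCount v t = 0 →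
      t.subst (Function.update (Term.var : ℕ → L.Term ℕ) v u) = t
  | .var w, h => by
      simp only [tCount, ite_eq_right_iff, one_ne_zero, imp_false] at h
      simp [Function.update, h]
  | .func _ ts, h => by
      simp only [tCount, Finset.sum_eq_zero_iff, Finset.mem_univ, forall_const] at h
      simp only [Term.subst]
      congr 1
      funext i
      exact subst_update_var_eq_self_of_tCount_eq_zero (ts i) (h i)

lemma Fm.subst_equal_var {v : ℕ} {t u : L.Term ℕ} (ht : tCount v t = 0) :
    (Fm.equal t (Term.var v)).subst v u = Fm.equal t u := by
  simp [Fm.subst, Fm.ssub, subst_update_var_eq_self_of_tCount_eq_zero t ht]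

/-- Repl⁻ with the atom `P := (t = v)` for a fresh variable `v`. -/
lemma replMinus_equal_right (s r t : L.Term ℕ) (Γ : Multiset (Fm L)) :
    ReplMinus L (Fm.equal s r ::ₘ Fm.equal t r ::ₘ Γ) (Fm.equal s r ::ₘ Fm.equal t s ::ₘ Γ) := by
  classical
  obtain ⟨v, hv⟩ := exists_tCount_eq_zero {s, r, t}
  have hvt : tCount v t = 0 := hv t (by simp)
  exact ⟨s, r, v, Fm.equal t (Term.var v), Γ, .equal _ _, hv s (by simp), hv r (by simp),
    by rw [Fm.subst_equal_var hvt], by rw [Fm.subst_equal_var hvt]⟩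

lemma DerC.contrEq {n : ℕ} {s r : L.Term ℕ} {Γ Δ : Multiset (Fm L)}
    (hd : DerC (ReplMinus L) n (Fm.equal s r ::ₘ Fm.equal s r ::ₘ Γ) Δ) :
    DerC (ReplMinus L) (n + 2) (Fm.equal s r ::ₘ Γ) Δ := by
  have hss : DerC (ReplMinus L) (n + 1) (Fm.equal s s ::ₘ Fm.equal s r ::ₘ Γ) Δ := by
    rw [Multiset.cons_swap]
    exact .repl (replMinus_equal_right s r s Γ) hd
  exact .ref s hss

/-- The contraction rule for equalities Contr^= is admissible in `G3c^=⁻`: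
if `s = r, s = r, Γ ⇒ Δ` is derivable, then so is `s = r, Γ ⇒ Δ`. -/
theorem contrEq_admissible_G3cEqMinus (L : FirstOrder.Language.{u, v})
    (s r : L.Term ℕ) (Γ Δ : Multiset (Fm L))
    (hd : ∃ n, DerC (ReplMinus L) n (Fm.equal s r ::ₘ Fm.equal s r ::ₘ Γ) Δ) :
    ∃ n, DerC (ReplMinus L) n (Fm.equal s r ::ₘ Γ) Δ :=
  let ⟨n, hn⟩ := hd
  ⟨n + 2, hn.contrEq⟩
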